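/- Binary consensus is unsolvable under connected communication: if 𝒜 is a simplicial action model such that the product update I[𝒜] of the binary input model I with 𝒜 is strongly connected and contains a facet whose input component is the all-0 facet and a facet whose input component is the all-1 facet, then the binary consensus task 𝒯 is not solvable in 𝒜, i.e., there is no morphism of simplicial models δ : I[𝒜] → I[𝒯] with π_I ∘ δ = π_I. -/
import Mathlib


/-! ### Chromatic simplicial complexes and Kripke frames -/

/-- A chromatic simplicial complex over the set of agents `A`, on the vertex type `V`. -/
structure CSC (A V : Type) where
  simplexes : Set (Set V)
  nonempty_mem : ∀ X ∈ simplexes, X.Nonempty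
  finite_mem : ∀ X ∈ simplexes, X.Finite
  down_closed : ∀ X ∈ simplexes, ∀ Y : Set V, Y ⊆ X → Y.Nonempty → Y ∈ simplexes
  color : V → A
  chromatic : ∀ X ∈ simplexes, Set.InjOn color X

namespace CSC

variable {A V W : Type}

/-- A vertex of the complex. -/
def IsVertex (C : CSC A V) (v : V) : Prop := {v} ∈ C.simplexes

/-- A facet: a maximal simplex. -/
def IsFacet (C : CSC A V) (X : Set V) : Prop :=
  X ∈ C.simplexes ∧ ∀ Y ∈ C.simplexes, X ⊆ Y → X = Y

/-- A pure chromatic simplicial complex of dimension `n`: all facets have `n+1` vertices. -/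
def Pure (C : CSC A V) (n : ℕ) : Prop :=
  ∀ X, C.IsFacet X → X.ncard = n + 1

/-- A chromatic simplicial map: sends simplexes to simplexes and preserves colors. -/
def IsChromMap (C : CSC A V) (D : CSC A W) (f : V → W) : Prop :=
  (∀ X ∈ C.simplexes, f '' X ∈ D.simplexes) ∧
  (∀ v, C.IsVertex v → D.color (f v) = C.color v)

/-- The type of facets of a complex. -/
def Facets (C : CSC A V) : Type := {X : Set V // C.IsFacet X}

/-- The vertices of a complex, as a type. -/
abbrev Vertices (C : CSC A V) : Type := {v : V // C.IsVertex v}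

end CSC

/-- A Kripke frame over the set of agents `A` with states `S`:
a family of equivalence (indistinguishability) relations indexed by agents. -/
structure KFrame (A S : Type) where
  rel : A → S → S → Prop
  isEquiv : ∀ a, Equivalence (rel a)

namespace KFrame

/-- A Kripke frame is proper if any two distinct states are distinguished by some agent. -/
def Proper {A S : Type} (M : KFrame A S) : Prop := ∀ s t : S, (∀ a, M.rel a s t) → s = t

/-- A morphism of Kripke frames. -/
def IsMorphism {A S T : Type} (M : KFrame A S) (N : KFrame A T) (f : S → T) : Prop :=
  ∀ a u v, M.rel a u v → N.rel a (f u) (f v)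

end KFrame


lemma CSC.isVertex_of_mem {A V : Type} (C : CSC A V) {X : Set V} {v : V}
    (hX : X ∈ C.simplexes) (hv : v ∈ X) : C.IsVertex v :=
  C.down_closed X hX {v} (by simpa using hv) ⟨v, rfl⟩

/-! ### Basic facts about pure chromatic complexes over `n+1` agents -/

namespace CSC

variable {n : ℕ} {V : Type}

lemma ncard_le_of_mem (C : CSC (Fin (n+1)) V) {X : Set V} (hX : X ∈ C.simplexes) :
    X.ncard ≤ n + 1 := by
  have h1 : (C.color '' X).ncard = X.ncard := Set.ncard_image_of_injOn (C.chromatic X hX)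
  calc X.ncard = (C.color '' X).ncard := h1.symm
    _ ≤ (Set.univ : Set (Fin (n+1))).ncard :=
        Set.ncard_le_ncard (Set.subset_univ _) Set.finite_univ
    _ = n + 1 := by rw [Set.ncard_univ]; simp

/-- Every simplex of a chromatic complex over `n+1` agents is contained in a facet. -/
lemma exists_facet_above (C : CSC (Fin (n+1)) V) :
    ∀ (k : ℕ) (X : Set V), X ∈ C.simplexes → n + 1 ≤ X.ncard + k →
      ∃ Y, C.IsFacet Y ∧ X ⊆ Y := by
  intro k
  induction k with
  | zero =>
    intro X hX hle
    refine ⟨X, ⟨hX, ?_⟩, subset_rfl⟩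
    intro Y hY hXY
    exact (Set.eq_of_subset_of_ncard_le hXY
      (le_trans (C.ncard_le_of_mem hY) (by omega)) (C.finite_mem Y hY))
  | succ k ih =>
    intro X hX hle
    by_cases hf : C.IsFacet X
    · exact ⟨X, hf, subset_rfl⟩
    · simp only [IsFacet, hX, true_and] at hf
      push_neg at hf
      obtain ⟨Y, hY, hXY, hne⟩ := hf
      have hlt : X.ncard < Y.ncard :=
        Set.ncard_lt_ncard (ssubset_of_subset_of_ne hXY hne) (C.finite_mem Y hY)
      obtain ⟨Z, hZ, hYZ⟩ := ih Y hY (by omega)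
      exact ⟨Z, hZ, hXY.trans hYZ⟩

lemma mem_facet (C : CSC (Fin (n+1)) V) {X : Set V} (hX : X ∈ C.simplexes) :
    ∃ Y, C.IsFacet Y ∧ X ⊆ Y :=
  C.exists_facet_above (n+1) X hX (by omega)

/-- In a pure complex of dimension `n` over `n+1` agents, every facet contains a vertex
of each color. -/
lemma facet_exists_color (C : CSC (Fin (n+1)) V) (hp : C.Pure n)
    {X : Set V} (hX : C.IsFacet X) (a : Fin (n+1)) : ∃ v ∈ X, C.color v = a := by
  have himg : (C.color '' X).ncard = n + 1 := by
    rw [Set.ncard_image_of_injOn (C.chromatic X hX.1)]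
    exact hp X hX
  have huniv : C.color '' X = Set.univ := by
    apply Set.eq_of_subset_of_ncard_le (Set.subset_univ _) ?_ Set.finite_univ
    rw [himg, Set.ncard_univ]; simp
  have ha : a ∈ C.color '' X := by rw [huniv]; trivial
  obtain ⟨v, hv, hc⟩ := ha
  exact ⟨v, hv, hc⟩

end CSC

/-! ### The functor F : from pure chromatic simplicial complexes to Kripke frames. -/

/-- The Kripke frame associated with a pure chromatic simplicial complex: states are the
facets, and two facets are indistinguishable by agent `a` iff they share an `a`-colored
vertex. -/
def kframeOf {n : ℕ} {V : Type} (C : CSC (Fin (n+1)) V) (hp : C.Pure n) :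
    KFrame (Fin (n+1)) C.Facets where
  rel a X Y := ∃ v, v ∈ X.1 ∩ Y.1 ∧ C.color v = a
  isEquiv a := by
    constructor
    · intro X
      obtain ⟨v, hv, hc⟩ := C.facet_exists_color hp X.2 a
      exact ⟨v, ⟨hv, hv⟩, hc⟩
    · rintro X Y ⟨v, ⟨h1, h2⟩, hc⟩
      exact ⟨v, ⟨h2, h1⟩, hc⟩
    · rintro X Y Z ⟨v, ⟨hvX, hvY⟩, hcv⟩ ⟨w, ⟨hwY, hwZ⟩, hcw⟩
      have hvw : v = w := C.chromatic Y.1 Y.2.1 hvY hwY (by rw [hcv, hcw])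
      exact ⟨v, ⟨hvX, by rw [hvw]; exact hwZ⟩, hcv⟩

lemma kframeOf_proper {n : ℕ} {V : Type} (C : CSC (Fin (n+1)) V) (hp : C.Pure n) :
    (kframeOf C hp).Proper := by
  have key : ∀ Z W : C.Facets, (∀ a, ∃ v, v ∈ Z.1 ∩ W.1 ∧ C.color v = a) → W.1 ⊆ Z.1 := by
    intro Z W hzw w hw
    obtain ⟨v, ⟨hvZ, hvW⟩, hcv⟩ := hzw (C.color w)
    have : v = w := C.chromatic W.1 W.2.1 hvW hw hcv
    exact this ▸ hvZ
  intro X Y h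
  apply Subtype.ext
  apply Set.Subset.antisymm
  · apply key Y X
    intro a
    obtain ⟨v, hv, hc⟩ := h a
    exact ⟨v, ⟨hv.2, hv.1⟩, hc⟩
  · exact key X Y h

/-! ### The epistemic language `𝓛_K` -/

/-- Epistemic formulas over agents `A` and atomic propositions `AP`:
`φ ::= p | ¬φ | (φ ∧ φ) | K_a φ`. -/
inductive Form (A AP : Type) : Type
  | atom : AP → Form A AP
  | neg : Form A AP → Form A AP
  | and : Form A AP → Form A AP → Form A AP
  | K : A → Form A AP → Form A AP

namespace Form

variable {A AP : Type}

/-- Implication, as a derived connective. -/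
def imp (φ ψ : Form A AP) : Form A AP := .neg (.and φ (.neg ψ))

/-- Disjunction, as a derived connective. -/
def or (φ ψ : Form A AP) : Form A AP := .neg (.and (.neg φ) (.neg ψ))

/-- A false formula. -/
def falsum [Inhabited AP] : Form A AP := .and (.atom default) (.neg (.atom default))

/-- A true formula. -/
def verum [Inhabited AP] : Form A AP := .neg falsum

end Form

/-- Finite disjunctions. -/
def bigOr {A AP : Type} [Inhabited AP] (l : List (Form A AP)) : Form A AP :=
  l.foldr Form.or Form.falsum

/-- Finite conjunctions. -/
def bigAnd {A AP : Type} [Inhabited AP] (l : List (Form A AP)) : Form A AP :=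
  l.foldr Form.and Form.verum

/-! ### Simplicial models and their semantics.
Atomic propositions are pairs `(a, x)`: "agent `a` holds the value `x`". -/

/-- A simplicial model: a chromatic simplicial complex together with a labeling of each
vertex by a set of atomic propositions concerning the agent coloring that vertex. -/
structure SModel (A V Val : Type) extends CSC A V where
  label : V → Set (A × Val)
  label_local : ∀ v, toCSC.IsVertex v → ∀ p ∈ label v, p.1 = color v

namespace SModel

variable {A V W Val : Type}

/-- Satisfaction of a formula at a facet of a simplicial model. -/
def sat (M : SModel A V Val) : Set V → Form A (A × Val) → Prop
  | X, .atom p => ∃ v ∈ X, p ∈ M.label v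
  | X, .neg φ => ¬ M.sat X φ
  | X, .and φ ψ => M.sat X φ ∧ M.sat X ψ
  | X, .K a φ => ∀ Y, M.toCSC.IsFacet Y → (∃ v, v ∈ X ∩ Y ∧ M.color v = a) → M.sat Y φ

/-- A morphism of simplicial models: a chromatic simplicial map preserving the labeling. -/
def IsMorphism (M : SModel A V Val) (N : SModel A W Val) (f : V → W) : Prop :=
  M.toCSC.IsChromMap N.toCSC f ∧ ∀ v, M.toCSC.IsVertex v → N.label (f v) = M.label v

end SModel

/-! ### Chromatic products -/

/-- The chromatic product of a set of vertices of `V` and a set of vertices of `W`: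
pairs of vertices with matching colors. -/
def chromPair {A V W : Type} (cV : V → A) (cW : W → A) (X : Set V) (Y : Set W) :
    Set (V × W) :=
  {p | p.1 ∈ X ∧ p.2 ∈ Y ∧ cV p.1 = cW p.2}

/-- The chromatic product of two facets of pure complexes over `n+1` agents has `n+1`
elements. -/
lemma CSC.ncard_chromPair {n : ℕ} {V W : Type} (C : CSC (Fin (n+1)) V)
    (D : CSC (Fin (n+1)) W) (hpC : C.Pure n) (hpD : D.Pure n)
    {X : Set V} {Y : Set W} (hX : C.IsFacet X) (hY : D.IsFacet Y) :
    (chromPair C.color D.color X Y).ncard = n + 1 := by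
  have hinj : Set.InjOn Prod.fst (chromPair C.color D.color X Y) := by
    rintro p ⟨hp1, hp2, hpc⟩ q ⟨hq1, hq2, hqc⟩ h
    have h2 : p.2 = q.2 := D.chromatic Y hY.1 hp2 hq2 (by rw [← hpc, ← hqc, h])
    exact Prod.ext h h2
  have himg : Prod.fst '' chromPair C.color D.color X Y = X := by
    apply Set.Subset.antisymm
    · rintro u ⟨p, hp, rfl⟩
      exact hp.1
    · intro u hu
      obtain ⟨w, hw, hcw⟩ := D.facet_exists_color hpD hY (C.color u)
      exact ⟨(u, w), ⟨hu, hw, hcw.symm⟩, rfl⟩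
  rw [← Set.ncard_image_of_injOn hinj, himg]
  exact hpC X hX

lemma CSC.chromPair_nonempty {n : ℕ} {V W : Type} (C : CSC (Fin (n+1)) V)
    (D : CSC (Fin (n+1)) W) (hpD : D.Pure n)
    {X : Set V} {Y : Set W} (hX : C.IsFacet X) (hY : D.IsFacet Y) :
    (chromPair C.color D.color X Y).Nonempty := by
  obtain ⟨u, hu⟩ := C.nonempty_mem X hX.1
  obtain ⟨w, hw, hcw⟩ := D.facet_exists_color hpD hY (C.color u)
  exact ⟨(u, w), hu, hw, hcw.symm⟩

/-! ### Simplicial action models and the simplicial product update -/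

/-- A simplicial action model: a chromatic simplicial complex of actions together with a
precondition formula for each facet. -/
structure SActModel (A W Val : Type) extends CSC A W where
  pre : Set W → Form A (A × Val)

/-- The product update of a simplicial model `M` with a simplicial action model `Act`:
the subcomplex of the chromatic cartesian product induced by the products `X × Y` of a
facet `X` of `M` and a facet (action) `Y` of `Act` such that `pre(Y)` holds at `X`.
Labels are inherited from the first component. -/
def SModel.update {A V W Val : Type} (M : SModel A V Val) (Act : SActModel A W Val) :
    SModel A (V × W) Val where
  simplexes := {Z | Z.Nonempty ∧ ∃ X Y, M.toCSC.IsFacet X ∧ Act.toCSC.IsFacet Y ∧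
    M.sat X (Act.pre Y) ∧ Z ⊆ chromPair M.color Act.color X Y}
  nonempty_mem _ h := h.1
  finite_mem Z h := by
    obtain ⟨-, X, Y, hX, hY, -, hsub⟩ := h
    exact (((M.toCSC.finite_mem X hX.1).prod (Act.toCSC.finite_mem Y hY.1)).subset
      (fun p hp => Set.mk_mem_prod hp.1 hp.2.1)).subset hsub
  down_closed Z hZ Y' hsub hne := by
    obtain ⟨-, X, Y, hX, hY, hpre, hZsub⟩ := hZ
    exact ⟨hne, X, Y, hX, hY, hpre, hsub.trans hZsub⟩
  color p := M.color p.1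
  chromatic := by
    rintro Z ⟨-, X, Y, hX, hY, -, hsub⟩ p hp q hq hc
    obtain ⟨hp1, hp2, hpc⟩ := hsub hp
    obtain ⟨hq1, hq2, hqc⟩ := hsub hq
    have h1 : p.1 = q.1 := M.toCSC.chromatic X hX.1 hp1 hq1 hc
    have h2 : p.2 = q.2 := Act.toCSC.chromatic Y hY.1 hp2 hq2 (by rw [← hpc, ← hqc, h1])
    exact Prod.ext h1 h2
  label p := M.label p.1
  label_local := by
    rintro ⟨u, w⟩ hv p hp
    obtain ⟨-, X, Y, hX, hY, -, hsub⟩ := hv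
    have hu : u ∈ X := (hsub (Set.mem_singleton _)).1
    exact M.label_local u (M.toCSC.isVertex_of_mem hX.1 hu) p hp

/-- The product update of pure simplicial models is pure: its facets are exactly the
chromatic products `X × Y` of enabled pairs of facets. -/
lemma SModel.update_pure {n : ℕ} {V W Val : Type} (M : SModel (Fin (n+1)) V Val)
    (Act : SActModel (Fin (n+1)) W Val) (hpM : M.toCSC.Pure n)
    (hpA : Act.toCSC.Pure n) : (M.update Act).toCSC.Pure n := by
  rintro Z ⟨⟨-, X, Y, hX, hY, hpre, hsub⟩, hmax⟩
  have hne : (chromPair M.color Act.color X Y).Nonempty :=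
    M.toCSC.chromPair_nonempty Act.toCSC hpA hX hY
  have hmem : chromPair M.color Act.color X Y ∈ (M.update Act).simplexes :=
    ⟨hne, X, Y, hX, hY, hpre, subset_rfl⟩
  have hZ : Z = chromPair M.color Act.color X Y := hmax _ hmem hsub
  rw [hZ]
  exact M.toCSC.ncard_chromPair Act.toCSC hpM hpA hX hY

/-! ### Strong connectivity -/

/-- Two facets of a pure `n`-dimensional complex are strongly adjacent if they share an
`(n-1)`-dimensional face, i.e. a simplex with `n` vertices. -/
def CSC.StrongStep {A V : Type} (C : CSC A V) (n : ℕ) (X Y : Set V) : Prop :=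
  C.IsFacet X ∧ C.IsFacet Y ∧ ∃ Z ∈ C.simplexes, Z ⊆ X ∩ Y ∧ Z.ncard = n

/-- A pure complex of dimension `n` is strongly connected if any two facets are joined by
a sequence of facets in which consecutive facets share an `(n-1)`-dimensional face. -/
def CSC.StronglyConnected {A V : Type} (C : CSC A V) (n : ℕ) : Prop :=
  ∀ X Y, C.IsFacet X → C.IsFacet Y → Relation.ReflTransGen (C.StrongStep n) X Y

/-! ### The input simplicial model and the consensus task -/

/-- The input simplicial model: each agent independently receives an input value in
`Val`. The vertex `(a, x)` means "agent `a` has input `x`", labeled by the corresponding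
atomic proposition; simplexes are the partial input assignments, so facets are the total
input assignments. -/
def inputModel (n : ℕ) (Val : Type) : SModel (Fin (n+1)) (Fin (n+1) × Val) Val where
  simplexes := {X | X.Nonempty ∧ Set.InjOn Prod.fst X}
  nonempty_mem _ h := h.1
  finite_mem X h := Set.Finite.of_finite_image (Set.toFinite _) h.2
  down_closed X hX Y hYX hY := ⟨hY, hX.2.mono hYX⟩
  color := Prod.fst
  chromatic _ h := h.2
  label p := {p}
  label_local := by
    rintro v _ p hp
    rw [Set.mem_singleton_iff] at hp
    rw [hp]

/-- The formula `φ_x`: "at least one agent has input `x`". -/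
def someone (n : ℕ) {Val : Type} [Inhabited Val] (x : Val) :
    Form (Fin (n+1)) (Fin (n+1) × Val) :=
  bigOr ((List.finRange (n+1)).map fun a => Form.atom (a, x))

/-- The decision assignment where every agent decides the value `x`. -/
def allDecide (n : ℕ) {Val : Type} (x : Val) : Set (Fin (n+1) × Val) := {p | p.2 = x}

open Classical in
/-- The binary consensus task, as a simplicial action model: it has exactly two facets,
`X_0 = allDecide false` (every agent decides `0`, with precondition "someone has input
`0`", i.e. true at every input facet except the all-`1` one) and `X_1 = allDecide true`
(symmetrically). -/
noncomputable def consensusTask (n : ℕ) :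
    SActModel (Fin (n+1)) (Fin (n+1) × Bool) Bool where
  simplexes := {Z | Z.Nonempty ∧ Set.InjOn Prod.fst Z ∧ ∃ b : Bool, ∀ p ∈ Z, p.2 = b}
  nonempty_mem _ h := h.1
  finite_mem Z h := Set.Finite.of_finite_image (Set.toFinite _) h.2.1
  down_closed Z hZ Y hYZ hY :=
    ⟨hY, hZ.2.1.mono hYZ, hZ.2.2.imp fun b hb p hp => hb p (hYZ hp)⟩
  color := Prod.fst
  chromatic _ h := h.2.1
  pre Z := if ∃ p ∈ Z, p.2 = true then someone n true else someone n false

/-! ### Auxiliary lemmas for Statement 15 -/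

section Aux

lemma task_facet_eq {n : ℕ} {Y : Set (Fin (n+1) × Bool)}
    (hY : (consensusTask n).toCSC.IsFacet Y) : ∃ b : Bool, Y = {p | p.2 = b} := by
  obtain ⟨hne, hinj, b, hb⟩ := hY.1
  refine ⟨b, hY.2 {p | p.2 = b} ?_ (fun p hp => hb p hp)⟩
  refine ⟨⟨(0, b), rfl⟩, ?_, b, fun p hp => hp⟩
  rintro p hp q hq h
  exact Prod.ext h (hp.trans hq.symm)

lemma allInput_ncard {n : ℕ} (b : Bool) :
    ({p : Fin (n+1) × Bool | p.2 = b}).ncard = n + 1 := by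
  have : {p : Fin (n+1) × Bool | p.2 = b} = (fun a : Fin (n+1) => (a, b)) '' Set.univ := by
    ext ⟨a, c⟩
    simp [eq_comm]
  rw [this, Set.ncard_image_of_injective _ (fun a a' h => (Prod.mk.injEq _ _ _ _ ▸ h).1)]
  rw [Set.ncard_univ]; simp

lemma input_facet_eq {n : ℕ} {b : Bool} {X : Set (Fin (n+1) × Bool)}
    (hX : (inputModel n Bool).toCSC.IsFacet X)
    (hsub : {p : Fin (n+1) × Bool | p.2 = b} ⊆ X) : X = {p | p.2 = b} := by
  refine (Set.eq_of_subset_of_ncard_le hsub ?_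
    ((inputModel n Bool).toCSC.finite_mem X hX.1)).symm
  rw [allInput_ncard]
  exact (inputModel n Bool).toCSC.ncard_le_of_mem hX.1

lemma sat_bigOr {A V Val : Type} [Inhabited (A × Val)] (M : SModel A V Val) (X : Set V)
    (l : List (Form A (A × Val))) : M.sat X (bigOr l) ↔ ∃ φ ∈ l, M.sat X φ := by
  induction l with
  | nil => simp [bigOr, Form.falsum, SModel.sat]
  | cons φ l ih =>
    simp only [bigOr, List.foldr_cons, Form.or, SModel.sat, List.mem_cons] at *
    constructor
    · intro h
      by_cases hφ : M.sat X φ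
      · exact ⟨φ, Or.inl rfl, hφ⟩
      · obtain ⟨ψ, hψ, hs⟩ := ih.1 (by tauto)
        exact ⟨ψ, Or.inr hψ, hs⟩
    · rintro ⟨ψ, h | h, hs⟩
      · subst h; tauto
      · have := ih.2 ⟨ψ, h, hs⟩; tauto

lemma sat_someone {n : ℕ} {X : Set (Fin (n+1) × Bool)} {b : Bool} :
    (inputModel n Bool).sat X (someone n b) ↔ ∃ a : Fin (n+1), (a, b) ∈ X := by
  rw [someone, sat_bigOr]
  constructor
  · rintro ⟨φ, hφ, hs⟩
    simp only [List.mem_map, List.mem_finRange] at hφ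
    obtain ⟨a, -, rfl⟩ := hφ
    obtain ⟨v, hv, hlab⟩ := hs
    have : v = (a, b) := by
      simpa [inputModel, eq_comm] using hlab
    exact ⟨a, this ▸ hv⟩
  · rintro ⟨a, ha⟩
    refine ⟨Form.atom (a, b), ?_, ⟨(a, b), ha, ?_⟩⟩
    · simp only [List.mem_map, List.mem_finRange, true_and]
      exact ⟨a, rfl⟩
    · simp [inputModel]

lemma consensus_pre {n : ℕ} (b : Bool) :
    (consensusTask n).pre {p | p.2 = b} = someone n b := by
  simp only [consensusTask]
  cases b
  · rw [if_neg]
    rintro ⟨p, hp, hp'⟩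
    simp only [Set.mem_setOf_eq] at hp
    rw [hp] at hp'
    exact Bool.false_ne_true hp'
  · rw [if_pos ⟨((0 : Fin (n+1)), true), rfl, rfl⟩]

end Aux

/-- Binary consensus is unsolvable under connected communication: if
`𝒜` is a simplicial action model such that `I[𝒜]` is strongly connected and contains a
facet whose input component is the all-`0` input facet and one whose input component is
the all-`1` input facet, then there is no morphism of simplicial models
`δ : I[𝒜] → I[𝒯]` commuting with the projections to `I`. -/
theorem statement15 (n : ℕ) {W : Type} (Act : SActModel (Fin (n+1)) W Bool)
    (hsc : ((inputModel n Bool).update Act).toCSC.StronglyConnected n)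
    (h0 : ∃ Z, ((inputModel n Bool).update Act).toCSC.IsFacet Z ∧
      Prod.fst '' Z = {p : Fin (n+1) × Bool | p.2 = false})
    (h1 : ∃ Z, ((inputModel n Bool).update Act).toCSC.IsFacet Z ∧
      Prod.fst '' Z = {p : Fin (n+1) × Bool | p.2 = true}) :
    ¬ ∃ δ : (Fin (n+1) × Bool) × W → (Fin (n+1) × Bool) × (Fin (n+1) × Bool),
        ((inputModel n Bool).update Act).IsMorphism
          ((inputModel n Bool).update (consensusTask n)) δ ∧
        ∀ p, ((inputModel n Bool).update Act).toCSC.IsVertex p → (δ p).1 = p.1 := by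
  rintro ⟨δ, ⟨⟨hmap, -⟩, -⟩, hproj⟩
  set U := (inputModel n Bool).update Act with hU
  -- decision of every facet
  have claim1 : ∀ Z, U.toCSC.IsFacet Z → ∃ b : Bool, (∀ v ∈ Z, (δ v).2.2 = b) ∧
      ∀ c : Bool, Prod.fst '' Z = {p : Fin (n+1) × Bool | p.2 = c} → b = c := by
    intro Z hZ
    have himg : δ '' Z ∈ ((inputModel n Bool).update (consensusTask n)).simplexes :=
      hmap Z hZ.1
    obtain ⟨-, X, Y, hX, hY, hpre, hsub⟩ := himg
    obtain ⟨b, rfl⟩ := task_facet_eq hY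
    refine ⟨b, ?_, ?_⟩
    · intro v hv
      exact (hsub ⟨v, hv, rfl⟩).2.1
    · intro c hc
      have hXc : X = {p : Fin (n+1) × Bool | p.2 = c} := by
        apply input_facet_eq hX
        intro u hu
        rw [← hc] at hu
        obtain ⟨v, hv, rfl⟩ := hu
        have h1 : (δ v).1 ∈ X := (hsub ⟨v, hv, rfl⟩).1
        rwa [hproj v (U.toCSC.isVertex_of_mem hZ.1 hv)] at h1
      rw [consensus_pre b] at hpre
      obtain ⟨a, ha⟩ := sat_someone.1 hpre
      rw [hXc] at ha
      exact ha
  obtain ⟨Z0, hZ0, hZ0f⟩ := h0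
  obtain ⟨Z1, hZ1, hZ1f⟩ := h1
  have hpath := hsc Z0 Z1 hZ0 hZ1
  obtain ⟨b0, hD0, hc0⟩ := claim1 Z0 hZ0
  have hb0 : b0 = false := hc0 false hZ0f
  -- along the path, the decision stays `false`
  have key : ∀ Z', Relation.ReflTransGen (U.toCSC.StrongStep n) Z0 Z' →
      ∀ b' : Bool, (∀ v ∈ Z', (δ v).2.2 = b') → b' = false := by
    intro Z' hpath
    induction hpath with
    | refl =>
      intro b' hD'
      obtain ⟨v, hv⟩ := U.toCSC.nonempty_mem Z0 hZ0.1
      rw [← hD' v hv, hD0 v hv, hb0]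
    | tail _ hstep ih =>
      rename_i Zm Z'' _
      intro b' hD'
      obtain ⟨hZm, hZ'', S, hS, hSsub, -⟩ := hstep
      obtain ⟨bm, hDm, -⟩ := claim1 Zm hZm
      have hbm : bm = false := ih bm hDm
      obtain ⟨v, hv⟩ := U.toCSC.nonempty_mem S hS
      rw [← hD' v (hSsub hv).2, hDm v (hSsub hv).1, hbm]
  obtain ⟨b1, hD1, hc1⟩ := claim1 Z1 hZ1
  have := key Z1 hpath b1 hD1
  rw [hc1 true hZ1f] at this
  exact Bool.noConfusion this
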